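/- For every x ≥ 1, ∂τ/∂t(x, (x+1)²/(2x+3)) > 0, where τ(x,t) = (1/x)(t - (t+x+1)(t/(1+t))^{x+1}). -/

import Mathlib

/-!
At `t₀ = (x+1)²/(2x+3)` one has `t₀/(1+t₀) = a²` with `a = (x+1)/(x+2)`, and the derivative
collapses to `(1/x)(1 - a^(2x+3) · (7x²+21x+16)/((x+1)(x+2)))`. The bound
`log (1+u) ≥ 2u/(2+u)` at `u = 1/(x+1)` gives `a^(2x+3) ≤ e⁻²`, and `e² > 7.389` beats the
rational factor once `x ≥ 1`.
-/

open Real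

noncomputable def tau (x t : ℝ) : ℝ := (1/x) * (t - (t + x + 1) * (t/(1+t)) ^ (x+1))

lemma rpow_two_mul_add_three_le_exp_neg_two {x : ℝ} (hx : -1 < x) :
    ((x + 1) / (x + 2)) ^ (2 * x + 3) ≤ exp (-2) := by
  have hx1 : 0 < x + 1 := by linarith
  have h3 : 0 < 2 * x + 3 := by linarith
  have hlog : 2 / (2 * x + 3) ≤ log ((x + 2) / (x + 1)) := by
    have h := le_log_one_add_of_nonneg (inv_pos.2 hx1).le
    rwa [show 1 + (x + 1)⁻¹ = (x + 2) / (x + 1) by field_simp; ring,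
      show 2 * (x + 1)⁻¹ / ((x + 1)⁻¹ + 2) = 2 / (2 * x + 3) by field_simp; ring] at h
  rw [div_le_iff₀ h3] at hlog
  rw [rpow_def_of_pos (div_pos hx1 (by linarith)), ← inv_div, log_inv, exp_le_exp]
  linarith

lemma hasDerivAt_tau {x t : ℝ} (hx : 0 ≤ x) (ht : 1 + t ≠ 0) :
    HasDerivAt (tau x)
      ((1 / x) * (1 - (t / (1 + t)) ^ (x + 1)
        - (t + x + 1) * (x + 1) * (t / (1 + t)) ^ x / (1 + t) ^ 2)) t := by
  have hq : HasDerivAt (fun s : ℝ => s / (1 + s)) (1 / (1 + t) ^ 2) t :=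
    ((hasDerivAt_id' t).div ((hasDerivAt_id' t).const_add 1) ht).congr_deriv (by ring)
  have hpow := hq.rpow_const (p := x + 1) (Or.inr (by linarith))
  rw [add_sub_cancel_right] at hpow
  refine (((hasDerivAt_id' t).sub
    ((((hasDerivAt_id' t).add_const x).add_const 1).mul hpow)).const_mul (1 / x)).congr_deriv ?_
  ring

lemma deriv_tau_eq {x : ℝ} (hx : 0 < x) :
    deriv (tau x) ((x + 1) ^ 2 / (2 * x + 3)) =
      (1 / x) * (1 - ((x + 1) / (x + 2)) ^ (2 * x + 3)
        * ((7 * x ^ 2 + 21 * x + 16) / ((x + 1) * (x + 2)))) := by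
  set a := (x + 1) / (x + 2) with ha
  have ha0 : 0 < a := by positivity
  have h1t : 1 + (x + 1) ^ 2 / (2 * x + 3) = (x + 2) ^ 2 / (2 * x + 3) := by
    field_simp; ring
  have hq : (x + 1) ^ 2 / (2 * x + 3) / (1 + (x + 1) ^ 2 / (2 * x + 3)) = a ^ 2 := by
    rw [h1t, ha]; field_simp
  have hqx : (a ^ 2) ^ x = a ^ (2 * x + 3) / a ^ 3 := by
    rw [← rpow_natCast_mul ha0.le, eq_div_iff (by positivity), ← rpow_add_natCast ha0.ne']
    norm_num
  have hqx1 : (a ^ 2) ^ (x + 1) = a ^ (2 * x + 3) / a := by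
    rw [rpow_add_one (by positivity), hqx]; field_simp
  rw [(hasDerivAt_tau hx.le (by rw [h1t]; positivity)).deriv, hq, hqx, hqx1, h1t, ha]
  field_simp
  ring

lemma quadratic_lt_exp_two_mul {x : ℝ} (hx : 1 ≤ x) :
    7 * x ^ 2 + 21 * x + 16 < exp 2 * ((x + 1) * (x + 2)) := by
  have he : (7.389 : ℝ) < exp 2 := by
    rw [show (2 : ℝ) = 1 + 1 by norm_num, exp_add]
    nlinarith [exp_one_gt_d9]
  nlinarith

theorem stmt9 : ∀ x : ℝ, 1 ≤ x →
    0 < deriv (fun t => tau x t) ((x+1)^2/(2*x+3)) := by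
  intro x hx
  have hx0 : 0 < x := by linarith
  rw [deriv_tau_eq hx0]
  refine mul_pos (by positivity) (sub_pos.2 ?_)
  have hR : 0 < (7 * x ^ 2 + 21 * x + 16) / ((x + 1) * (x + 2)) := by positivity
  calc ((x + 1) / (x + 2)) ^ (2 * x + 3) * ((7 * x ^ 2 + 21 * x + 16) / ((x + 1) * (x + 2)))
      ≤ exp (-2) * ((7 * x ^ 2 + 21 * x + 16) / ((x + 1) * (x + 2))) :=
        mul_le_mul_of_nonneg_right (rpow_two_mul_add_three_le_exp_neg_two (by linarith)) hR.le
    _ < 1 := by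
        rw [exp_neg, inv_mul_lt_iff₀ (exp_pos 2), div_lt_iff₀ (by positivity), mul_one]
        exact quadratic_lt_exp_two_mul hx
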